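/- Let A ∈ ℂ^{n×n}, let (W, R, w', r) be an Arnoldi-like decomposition of order m for A (so A·W = W·R + r·w'·e_mᵀ), and let S ∈ ℂ^{d×n}. Suppose Q ∈ ℂ^{d×m}, an invertible upper triangular T ∈ ℂ^{m×m}, q ∈ ℂ^d, t ∈ ℂ^m and t' ∈ ℂ satisfy S·W = Q·T and S·w' = Q·t + t'·q. Let τ := T m m be the last diagonal entry of T, and define X := T·R·T⁻¹ + (r/τ)·t·e_mᵀ. Then (S·A·W)·T⁻¹ = Q·X + (r·t'/τ)·q·e_mᵀ. -/
import Mathlib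

open Matrix

lemma aux_vecMulVec_mul {k l p : Type*} [Fintype l] (u : k → ℂ) (v : l → ℂ)
    (M : Matrix l p ℂ) : vecMulVec u v * M = vecMulVec u (v ᵥ* M) := by
  ext i j
  simp [Matrix.mul_apply, vecMulVec_apply, vecMul, dotProduct, Finset.mul_sum, mul_assoc]

lemma aux_mul_vecMulVec {k l p : Type*} [Fintype l] (M : Matrix k l ℂ) (u : l → ℂ)
    (v : p → ℂ) : M * vecMulVec u v = vecMulVec (M *ᵥ u) v := by
  ext i j
  simp [Matrix.mul_apply, vecMulVec_apply, mulVec, dotProduct, Finset.sum_mul, mul_assoc]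

/-- (Whitened-sketched Arnoldi relation.) For an Arnoldi-like
decomposition `A·W = W·R + r·w'·eₘᵀ`, a sketch `S` with QR factorization `S·W = Q·T`
(`T` invertible upper triangular) and `S·w' = Q·t + t'·q`, setting `τ = T m m` and
`X = T·R·T⁻¹ + (r/τ)·t·eₘᵀ`, one has `(S·A·W)·T⁻¹ = Q·X + (r·t'/τ)·q·eₘᵀ`. -/
theorem whitened_sketched_arnoldi {n m d : ℕ} (hm : 1 ≤ m)
    (A : Matrix (Fin n) (Fin n) ℂ) (W : Matrix (Fin n) (Fin m) ℂ)
    (R : Matrix (Fin m) (Fin m) ℂ) (w' : Fin n → ℂ) (r : ℂ)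
    (hR : ∀ i j : Fin m, (j : ℕ) + 1 < (i : ℕ) → R i j = 0)
    (hdec : A * W = W * R + r • Matrix.vecMulVec w' (Pi.single (⟨m - 1, by omega⟩ : Fin m) 1))
    (S : Matrix (Fin d) (Fin n) ℂ)
    (Q : Matrix (Fin d) (Fin m) ℂ) (T : Matrix (Fin m) (Fin m) ℂ)
    (hT : ∀ i j : Fin m, j < i → T i j = 0) (hTunit : IsUnit T)
    (q : Fin d → ℂ) (t : Fin m → ℂ) (t' : ℂ)
    (hQR : S * W = Q * T)
    (hw' : S.mulVec w' = Q.mulVec t + t' • q)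
    (τ : ℂ) (hτ : τ = T ⟨m - 1, by omega⟩ ⟨m - 1, by omega⟩)
    (X : Matrix (Fin m) (Fin m) ℂ)
    (hX : X = T * R * T⁻¹ +
      (r / τ) • Matrix.vecMulVec t (Pi.single (⟨m - 1, by omega⟩ : Fin m) 1)) :
    (S * A * W) * T⁻¹ =
      Q * X + (r * t' / τ) • Matrix.vecMulVec q (Pi.single (⟨m - 1, by omega⟩ : Fin m) 1) := by
  set lst : Fin m := ⟨m - 1, by omega⟩ with hlst
  set e : Fin m → ℂ := Pi.single lst 1 with he
  have hTT : T * T⁻¹ = 1 := mul_nonsing_inv T ((Matrix.isUnit_iff_isUnit_det T).mp hTunit)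
  -- row `lst` of `T` is `τ • e`
  have h1 : e ᵥ* T = τ • e := by
    funext j
    simp only [vecMul, dotProduct, he, Pi.smul_apply, smul_eq_mul, Pi.single_apply]
    rw [Finset.sum_eq_single lst]
    · by_cases hj : j = lst
      · subst hj; simp [hτ]
      · have hjl : j < lst := by
          have hj2 := j.isLt
          have hne : (j : ℕ) ≠ m - 1 := fun hc => hj (Fin.ext hc)
          exact Fin.lt_iff_val_lt_val.mpr (by simp only [hlst]; omega)
        simp [hT lst j hjl, hj]
    · intro b _ hb; simp [hb]
    · intro hb; exact absurd (Finset.mem_univ lst) hb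
  have h1' : e = τ • (e ᵥ* T⁻¹) := by
    have := congrArg (fun v => v ᵥ* T⁻¹) h1
    simpa [Matrix.vecMul_vecMul, hTT, Matrix.smul_vecMul] using this
  have hτ0 : τ ≠ 0 := by
    intro h0
    have := congrFun h1' lst
    simp [he, h0, Pi.single_apply] at this
  have h2 : e ᵥ* T⁻¹ = τ⁻¹ • e := by
    rw [eq_comm, inv_smul_eq_iff₀ hτ0]; exact h1'
  calc (S * A * W) * T⁻¹
      = (Q * (T * R) + r • vecMulVec (S *ᵥ w') e) * T⁻¹ := by
        rw [Matrix.mul_assoc S A W, hdec, Matrix.mul_add, Matrix.mul_smul,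
          aux_mul_vecMulVec, ← Matrix.mul_assoc S W R, hQR, Matrix.mul_assoc]
    _ = Q * (T * R * T⁻¹) + r • vecMulVec (S *ᵥ w') (τ⁻¹ • e) := by
        rw [Matrix.add_mul, Matrix.smul_mul, aux_vecMulVec_mul, h2, Matrix.mul_assoc]
    _ = Q * X + (r * t' / τ) • vecMulVec q e := by
        rw [hX, Matrix.mul_add, Matrix.mul_smul, aux_mul_vecMulVec, hw']
        ext i j
        simp only [Matrix.add_apply, Matrix.smul_apply, vecMulVec_apply, Pi.add_apply,
          Pi.smul_apply, smul_eq_mul]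
        ring
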